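/- For any n×n complex matrix X, the 2n×2n block matrix [[|X*|, X],[X*, |X|]] is positive semidefinite. -/

import Mathlib

open scoped Matrix ComplexOrder

noncomputable section

/-- The numerical range of a matrix. -/
def numRange {m : Type*} [Fintype m] (X : Matrix m m ℂ) : Set ℂ :=
  {z | ∃ v : m → ℂ, star v ⬝ᵥ v = 1 ∧ z = star v ⬝ᵥ X.mulVec v}

/-- The inradius of a subset of the plane: the radius of the largest disc it contains. -/
def inRad (S : Set ℂ) : ℝ := sSup {r : ℝ | ∃ c : ℂ, Metric.closedBall c r ⊆ S}

/-- The indiameter: the diameter of the largest disc contained in the set. -/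
def inDiam (S : Set ℂ) : ℝ := 2 * inRad S

/-- The numerical range of the compression of `X` to the subspace `S`. -/
def nrOn {m : Type*} [Fintype m] (X : Matrix m m ℂ) (S : Submodule ℂ (m → ℂ)) : Set ℂ :=
  {z | ∃ v ∈ S, star v ⬝ᵥ v = 1 ∧ z = star v ⬝ᵥ X.mulVec v}

/-- The elliptical width `δ₂(X)`: the supremum of the indiameters of the numerical
ranges of compressions of `X` to two-dimensional subspaces. -/
def ellWidth {m : Type*} [Fintype m] (X : Matrix m m ℂ) : ℝ :=
  sSup {d | ∃ S : Submodule ℂ (m → ℂ), Module.finrank ℂ S = 2 ∧ d = inDiam (nrOn X S)}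

/-- The operator (spectral) norm of a matrix. -/
def opNorm {m : Type*} [Fintype m] [DecidableEq m] (M : Matrix m m ℂ) : ℝ :=
  ‖Matrix.toEuclideanCLM (𝕜 := ℂ) M‖

/-- The Frobenius (Hilbert–Schmidt) norm of a matrix. -/
def frobNorm {m : Type*} [Fintype m] (M : Matrix m m ℂ) : ℝ :=
  Real.sqrt ((Matrix.trace (Mᴴ * M)).re)

/-- Eigenvalues of a Hermitian matrix in decreasing order (junk value `0` otherwise):
`eigDesc M k` is the `(k+1)`-th largest eigenvalue of `M`. -/
def eigDesc {m : ℕ} (M : Matrix (Fin m) (Fin m) ℂ) (k : Fin m) : ℝ :=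
  if h : M.IsHermitian then (h.eigenvalues ∘ Tuple.sort h.eigenvalues) k.rev else 0

/-- The absolute value `|X| = (XᴴX)^(1/2)` of a matrix. -/
def matAbs {m : Type*} [Fintype m] [DecidableEq m] (X : Matrix m m ℂ) : Matrix m m ℂ :=
  ((Matrix.posSemidef_conjTranspose_mul_self X).1.eigenvectorUnitary : Matrix m m ℂ) *
    Matrix.diagonal (((↑) : ℝ → ℂ) ∘ (Real.sqrt ·) ∘ (Matrix.posSemidef_conjTranspose_mul_self X).1.eigenvalues) *
    (star (Matrix.posSemidef_conjTranspose_mul_self X).1.eigenvectorUnitary : Matrix m m ℂ)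

/-- The `2n × 2n` block matrix `[[A, X],[Xᴴ, B]]`, reindexed by `Fin (n+n)`. -/
def blockR {n : ℕ} (A X B : Matrix (Fin n) (Fin n) ℂ) :
    Matrix (Fin (n + n)) (Fin (n + n)) ℂ :=
  (Matrix.fromBlocks A X Xᴴ B).submatrix finSumFinEquiv.symm finSumFinEquiv.symm

/-- The operator norm distance from `X` to the scalar matrices. -/
def distScalar {m : Type*} [Fintype m] [DecidableEq m] (X : Matrix m m ℂ) : ℝ :=
  ⨅ a : ℂ, opNorm (X - a • 1)

/-- Apply a real function to a Hermitian matrix by the functional calculus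
(junk value `0` if the matrix is not Hermitian). -/
def hermApply {m : Type*} [Fintype m] [DecidableEq m] (f : ℝ → ℝ) (M : Matrix m m ℂ) :
    Matrix m m ℂ :=
  if h : M.IsHermitian then h.cfc f else 0

end

/-!
The matrix `H = [[0, X], [Xᴴ, 0]]` is self-adjoint with `H * H = [[X Xᴴ, 0], [0, Xᴴ X]]`, so
`|H| = [[|Xᴴ|, 0], [0, |X|]]` and the block matrix in question is `|H| + H = 2 H⁺ ≥ 0`.
-/

open Matrix
open scoped MatrixOrder

lemma cfcAbs_add_self_nonneg {A : Type*} [NonUnitalRing A] [StarRing A] [TopologicalSpace A]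
    [Module ℝ A] [SMulCommClass ℝ A A] [IsScalarTower ℝ A A]
    [NonUnitalContinuousFunctionalCalculus ℝ A IsSelfAdjoint] [PartialOrder A]
    [StarOrderedRing A] [NonnegSpectrumClass ℝ A] [IsTopologicalRing A] [T2Space A]
    {a : A} (ha : IsSelfAdjoint a) :
    0 ≤ CFC.abs a + a := by
  rw [CFC.abs_add_self a ha]
  exact smul_nonneg zero_le_two (CFC.posPart_nonneg a)

section BlockMatrix

variable {𝕜 m n : Type*} [RCLike 𝕜] [Fintype m] [Fintype n] [DecidableEq m] [DecidableEq n]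

lemma fromBlocks_sqrt_mul_self {A : Matrix m m 𝕜} {D : Matrix n n 𝕜} (hA : 0 ≤ A) (hD : 0 ≤ D) :
    fromBlocks (CFC.sqrt A) 0 0 (CFC.sqrt D) * fromBlocks (CFC.sqrt A) 0 0 (CFC.sqrt D) =
      fromBlocks A 0 0 D := by
  simp [fromBlocks_multiply, CFC.sqrt_mul_sqrt_self, hA, hD]

lemma fromBlocks_diagonal_nonneg {A : Matrix m m 𝕜} {D : Matrix n n 𝕜} (hA : 0 ≤ A) (hD : 0 ≤ D) :
    0 ≤ fromBlocks A 0 0 D := by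
  have hS : IsSelfAdjoint (fromBlocks (CFC.sqrt A) 0 0 (CFC.sqrt D)) :=
    IsHermitian.fromBlocks (CFC.sqrt_nonneg A).isSelfAdjoint (by simp)
      (CFC.sqrt_nonneg D).isSelfAdjoint
  rw [← fromBlocks_sqrt_mul_self hA hD]
  exact hS.mul_self_nonneg

lemma sqrt_fromBlocks_diagonal {A : Matrix m m 𝕜} {D : Matrix n n 𝕜} (hA : 0 ≤ A) (hD : 0 ≤ D) :
    CFC.sqrt (fromBlocks A 0 0 D) = fromBlocks (CFC.sqrt A) 0 0 (CFC.sqrt D) :=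
  CFC.sqrt_unique (fromBlocks_sqrt_mul_self hA hD)
    (fromBlocks_diagonal_nonneg (CFC.sqrt_nonneg A) (CFC.sqrt_nonneg D))

lemma cfcAbs_fromBlocks_zero_conjTranspose (X : Matrix m n 𝕜) :
    CFC.abs (fromBlocks 0 X Xᴴ 0) = fromBlocks (CFC.sqrt (X * Xᴴ)) 0 0 (CFC.sqrt (Xᴴ * X)) := by
  rw [CFC.abs, ← sqrt_fromBlocks_diagonal (posSemidef_self_mul_conjTranspose X).nonneg
    (posSemidef_conjTranspose_mul_self X).nonneg]
  congr 1
  rw [star_eq_conjTranspose, fromBlocks_conjTranspose, fromBlocks_multiply]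
  simp

end BlockMatrix

lemma matAbs_eq_sqrt {m : Type*} [Fintype m] [DecidableEq m] (X : Matrix m m ℂ) :
    matAbs X = CFC.sqrt (Xᴴ * X) := by
  have hXX := posSemidef_conjTranspose_mul_self X
  rw [CFC.sqrt_eq_cfc, cfc_nnreal_eq_real _ (Xᴴ * X) hXX.nonneg, hXX.1.cfc_eq]
  simp only [IsHermitian.cfc, Unitary.conjStarAlgAut_apply, matAbs]
  congr 3
  funext i
  simp [Real.coe_toNNReal', hXX.eigenvalues_nonneg i]

/-- For any `X ∈ M_n(ℂ)`, the block matrix `[[|Xᴴ|, X],[Xᴴ, |X|]]`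
is positive semidefinite. -/
theorem stmt13 {n : ℕ} (X : Matrix (Fin n) (Fin n) ℂ) :
    (Matrix.fromBlocks (matAbs Xᴴ) X Xᴴ (matAbs X)).PosSemidef := by
  have hH : IsSelfAdjoint (fromBlocks 0 X Xᴴ 0) :=
    IsHermitian.fromBlocks isHermitian_zero rfl isHermitian_zero
  have h := cfcAbs_add_self_nonneg hH
  rw [cfcAbs_fromBlocks_zero_conjTranspose, fromBlocks_add] at h
  rw [matAbs_eq_sqrt, matAbs_eq_sqrt, conjTranspose_conjTranspose]
  simpa using h.posSemidef
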